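/- arXiv:2207.02170 — 4 statements merged into one kernel-verified Lean document; each statement's English description precedes it below -/
import Mathlib

section
/- Let T be a balanced tree with q leaves, and let H be a graph which is a union of copies of T all having the same set of leaves. Then the number of edges of H satisfies e(H) ≥ (|V(H)| − q)·ρ_T, where ρ_T = e(T)/(|V(T)| − q) is the density of T relative to its non-leaf vertices. -/
open Finset

/-- Bukh–Conlon: if `T` is a balanced tree with `q` leaves and `H` is a union of copies
of `T` all having the same set of leaves, then `e(H) ≥ (|V(H)| - q)·ρ_T`. -/
theorem stmt_2 {α β : Type*} [Fintype α] [DecidableEq α] [Fintype β] [DecidableEq β]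
    (T : SimpleGraph α) [DecidableRel T.Adj] (hT : T.IsTree)
    -- the set of leaves of `T`
    (L : Finset α) (hL : L = Finset.univ.filter (fun v => T.degree v = 1))
    -- the density of `T` relative to its non-leaf vertices
    (ρT : ℝ) (hρ : ρT = (T.edgeFinset.card : ℝ) / ((Fintype.card α - L.card : ℕ) : ℝ))
    -- `T` is balanced
    (hbal : ∀ S : Finset α, S ⊆ Finset.univ \ L → S.Nonempty →
      ρT * (S.card : ℝ) ≤ ((T.edgeFinset.filter (fun e => ∃ v ∈ S, v ∈ e)).card : ℝ))
    -- `H` is a union of copies of `T` (indexed by `ι`) with the same leaf set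
    (H : SimpleGraph β) [DecidableRel H.Adj]
    (ι : Type*) [Fintype ι] [Nonempty ι] (f : ι → α → β)
    (hinj : ∀ i, Function.Injective (f i))
    (hhom : ∀ i a b, T.Adj a b → H.Adj (f i a) (f i b))
    (L' : Finset β) (hleaves : ∀ i, L.image (f i) = L')
    (hV : ∀ v : β, ∃ i a, f i a = v)
    (hE : ∀ u v : β, H.Adj u v → ∃ i a b, T.Adj a b ∧ f i a = u ∧ f i b = v) :
    ((Fintype.card β : ℝ) - (L.card : ℝ)) * ρT ≤ (H.edgeFinset.card : ℝ) := by
  classical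
  letI : LinearOrder ι := LinearOrder.lift' (Fintype.equivFin ι) (Equiv.injective _)
  have hρ0 : 0 ≤ ρT := by
    rw [hρ]; positivity
  have hLL' : L'.card = L.card := by
    obtain ⟨i⟩ := ‹Nonempty ι›
    rw [← hleaves i, Finset.card_image_of_injective _ (hinj i)]
  have hLcard : L.card ≤ Fintype.card β := by
    rw [← hLL']; exact (Finset.card_le_card (Finset.subset_univ L')).trans_eq Finset.card_univ
  -- minimal index producing a vertex
  have hne : ∀ v : β, (univ.filter (fun i : ι => ∃ a, f i a = v)).Nonempty := by
    intro v
    obtain ⟨i, a, h⟩ := hV v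
    exact ⟨i, mem_filter.2 ⟨mem_univ _, a, h⟩⟩
  set m : β → ι := fun v => (univ.filter (fun i : ι => ∃ a, f i a = v)).min' (hne v) with hm
  have hm_mem : ∀ v, ∃ a, f (m v) a = v := by
    intro v
    have := Finset.min'_mem (univ.filter (fun i : ι => ∃ a, f i a = v)) (hne v)
    exact (mem_filter.1 this).2
  have hm_min : ∀ v i, (∃ a, f i a = v) → m v ≤ i := by
    intro v i h
    exact Finset.min'_le (univ.filter (fun i : ι => ∃ a, f i a = v)) i
      (mem_filter.2 ⟨mem_univ _, h⟩)
  set B : ι → Finset β := fun i => (univ \ L').filter (fun v => m v = i) with hB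
  set S : ι → Finset α := fun i => univ.filter (fun a => f i a ∈ B i) with hS
  have hBS : ∀ i, B i = (S i).image (f i) := by
    intro i
    apply Finset.Subset.antisymm
    · intro v hv
      have hmi : m v = i := (mem_filter.1 hv).2
      obtain ⟨a, ha⟩ := hm_mem v
      rw [hmi] at ha
      exact mem_image.2 ⟨a, mem_filter.2 ⟨mem_univ _, ha ▸ hv⟩, ha⟩
    · intro v hv
      obtain ⟨a, ha, rfl⟩ := mem_image.1 hv
      exact (mem_filter.1 ha).2
  have hScard : ∀ i, (S i).card = (B i).card := by
    intro i
    rw [hBS i, Finset.card_image_of_injective _ (hinj i)]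
  have hSsub : ∀ i, S i ⊆ univ \ L := by
    intro i a ha
    refine mem_sdiff.2 ⟨mem_univ _, fun haL => ?_⟩
    have h1 : f i a ∈ B i := (mem_filter.1 ha).2
    have h2 : f i a ∈ L' := by
      rw [← hleaves i]; exact Finset.mem_image_of_mem _ haL
    exact (mem_sdiff.1 (mem_filter.1 h1).1).2 h2
  -- sum of |S i| equals |V(H)| - |L|
  have hsum : ∑ i, (S i).card = Fintype.card β - L.card := by
    have h1 : (univ \ L').card = ∑ i, (B i).card := by
      apply Finset.card_eq_sum_card_fiberwise (f := m) (t := univ)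
      intro v _; exact mem_univ _
    have h2 : (univ \ L').card = Fintype.card β - L.card := by
      rw [Finset.card_sdiff_of_subset (Finset.subset_univ L'), Finset.card_univ, hLL']
    rw [← h2, h1]
    exact Finset.sum_congr rfl fun i _ => hScard i
  -- the edge sets
  set E : ι → Finset (Sym2 α) :=
    fun i => T.edgeFinset.filter (fun e => ∃ v ∈ S i, v ∈ e) with hEdef
  have hbal' : ∀ i, ρT * ((S i).card : ℝ) ≤ ((E i).card : ℝ) := by
    intro i
    rcases (S i).eq_empty_or_nonempty with h | h
    · rw [h]; simp
    · exact hbal (S i) (hSsub i) h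
  -- images of E i in H
  have hEsub : ∀ i, (E i).image (Sym2.map (f i)) ⊆ H.edgeFinset := by
    intro i e he
    obtain ⟨e₁, he₁, rfl⟩ := mem_image.1 he
    have hT₁ : e₁ ∈ T.edgeFinset := (mem_filter.1 he₁).1
    induction e₁ with
    | _ a b =>
      rw [SimpleGraph.mem_edgeFinset, SimpleGraph.mem_edgeSet] at hT₁
      simpa [SimpleGraph.mem_edgeFinset, SimpleGraph.mem_edgeSet] using hhom i a b hT₁
  have hEdisj : ∀ i ∈ (univ : Finset ι), ∀ j ∈ (univ : Finset ι), i ≠ j →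
      Disjoint ((E i).image (Sym2.map (f i))) ((E j).image (Sym2.map (f j))) := by
    intro i _ j _ hij
    rw [Finset.disjoint_left]
    intro e hei hej
    obtain ⟨e₁, he₁, he₁e⟩ := mem_image.1 hei
    obtain ⟨e₂, he₂, he₂e⟩ := mem_image.1 hej
    obtain ⟨v, hvS, hve⟩ := (mem_filter.1 he₁).2
    obtain ⟨w, hwS, hwe⟩ := (mem_filter.1 he₂).2
    have hvB : f i v ∈ B i := (mem_filter.1 hvS).2
    have hwB : f j w ∈ B j := (mem_filter.1 hwS).2
    have hfve : f i v ∈ e := he₁e ▸ Sym2.mem_map.2 ⟨v, hve, rfl⟩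
    have hfwe : f j w ∈ e := he₂e ▸ Sym2.mem_map.2 ⟨w, hwe, rfl⟩
    -- f i v is in the image of f j
    have h1 : ∃ c, f j c = f i v := by
      rw [← he₂e] at hfve
      obtain ⟨c, _, hc⟩ := Sym2.mem_map.1 hfve
      exact ⟨c, hc⟩
    have h2 : ∃ c, f i c = f j w := by
      rw [← he₁e] at hfwe
      obtain ⟨c, _, hc⟩ := Sym2.mem_map.1 hfwe
      exact ⟨c, hc⟩
    have hi : m (f i v) = i := (mem_filter.1 hvB).2
    have hj : m (f j w) = j := (mem_filter.1 hwB).2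
    have hij1 : i ≤ j := hi ▸ hm_min (f i v) j h1
    have hij2 : j ≤ i := hj ▸ hm_min (f j w) i h2
    exact hij (le_antisymm hij1 hij2)
  have hcardsum : ∑ i, (E i).card ≤ H.edgeFinset.card := by
    have h1 : (univ.biUnion fun i => (E i).image (Sym2.map (f i))).card
        = ∑ i, ((E i).image (Sym2.map (f i))).card := Finset.card_biUnion hEdisj
    have h2 : ∀ i, ((E i).image (Sym2.map (f i))).card = (E i).card := by
      intro i
      exact Finset.card_image_of_injective _ (Sym2.map.injective (hinj i))
    calc ∑ i, (E i).card = (univ.biUnion fun i => (E i).image (Sym2.map (f i))).card := by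
          rw [h1]; exact (Finset.sum_congr rfl fun i _ => (h2 i).symm)
      _ ≤ H.edgeFinset.card := Finset.card_le_card (Finset.biUnion_subset.2 fun i _ => hEsub i)
  -- put it all together
  have hcast : ((Fintype.card β : ℝ) - (L.card : ℝ)) = ∑ i, ((S i).card : ℝ) := by
    rw [← Nat.cast_sub hLcard, ← hsum]
    push_cast
    ring
  calc ((Fintype.card β : ℝ) - (L.card : ℝ)) * ρT
      = ∑ i, ρT * ((S i).card : ℝ) := by
        rw [hcast, Finset.sum_mul]
        exact Finset.sum_congr rfl fun i _ => mul_comm _ _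
    _ ≤ ∑ i, ((E i).card : ℝ) := Finset.sum_le_sum fun i _ => hbal' i
    _ ≤ (H.edgeFinset.card : ℝ) := by exact_mod_cast hcardsum
end

section
/- For every vertex v of a finite graph G with degree sequence d₁ ≥ d₂ ≥ ⋯ ≥ d_n, the number of paths on a vertices in G starting at v is at most d₁·d₂⋯d_{a−1}. -/
/-!
Encode a walk `v₀ v₁ … v_k` in mixed radix: the digit at step `i` is the position of `vᵢ₊₁` in a
fixed enumeration of the neighbours of `vᵢ`, with base `deg vᵢ`. Walks from `v₀` of a fixed length
then get distinct codes, and the code of a walk is smaller than the product of the degrees of the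
vertices it leaves. For a path these `k` vertices are distinct, so that product is at most
`d₁ ⋯ d_k` because the degree sequence is non-increasing.
-/

open Finset

lemma Antitone.prod_le_prod_range {d : ℕ → ℕ} (hd : Antitone d) (s : Finset ℕ) :
    ∏ i ∈ s, d i ≤ ∏ i ∈ range #s, d i := by
  induction s using Finset.induction_on_max with
  | empty => simp
  | insert a s hlt ih =>
    have has : a ∉ s := fun h => (hlt a h).false
    have hcard : #s ≤ a := by
      simpa using card_le_card fun x hx => mem_range.2 (hlt x hx)
    rw [prod_insert has, card_insert_of_notMem has, prod_range_succ, mul_comm]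
    exact Nat.mul_le_mul ih (hd hcard)

lemma Nat.eq_and_eq_of_add_mul_eq {m a a' b b' : ℕ} (ha : a < m) (ha' : a' < m)
    (h : a + m * b = a' + m * b') : a = a' ∧ b = b' := by
  have hm : 0 < m := by omega
  obtain ⟨hb, ha⟩ := (Nat.div_mod_unique hm).2 ⟨h, ha⟩
  obtain ⟨hb', ha'⟩ := (Nat.div_mod_unique hm).2 ⟨rfl, ha'⟩
  exact ⟨ha.symm.trans ha', hb.symm.trans hb'⟩

namespace SimpleGraph.Walk

variable {V : Type*} {G : SimpleGraph V} [G.LocallyFinite]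

def degreeProd {u v : V} (w : G.Walk u v) : ℕ :=
  (w.darts.map fun d => G.degree d.fst).prod

@[simp]
lemma degreeProd_nil {u : V} : (nil : G.Walk u u).degreeProd = 1 := rfl

@[simp]
lemma degreeProd_cons {u v w : V} (h : G.Adj u v) (p : G.Walk v w) :
    (cons h p).degreeProd = G.degree u * p.degreeProd := by
  simp [degreeProd]

noncomputable def code : {u v : V} → G.Walk u v → ℕ
  | _, _, nil => 0
  | u, _, cons h w =>
      (G.neighborFinset u).equivFin ⟨_, (G.mem_neighborFinset u _).2 h⟩ + G.degree u * w.code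

lemma code_lt_degreeProd {u v : V} (w : G.Walk u v) : w.code < w.degreeProd := by
  induction w with
  | nil => simp [code]
  | @cons u x v h w ih =>
    have hdigit : ((G.neighborFinset u).equivFin ⟨x, (G.mem_neighborFinset u x).2 h⟩ : ℕ) <
        G.degree u := Fin.is_lt _
    calc (cons h w).code
        < G.degree u + G.degree u * w.code := by rw [code]; omega
      _ = G.degree u * (w.code + 1) := by ring
      _ ≤ (cons h w).degreeProd := by rw [degreeProd_cons]; gcongr; exact ih

lemma sigma_eq_of_code_eq {u v₁ v₂ : V} (w₁ : G.Walk u v₁) (w₂ : G.Walk u v₂)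
    (hlen : w₁.length = w₂.length) (hcode : w₁.code = w₂.code) :
    (⟨v₁, w₁⟩ : Σ v, G.Walk u v) = ⟨v₂, w₂⟩ := by
  induction w₁ with
  | nil => cases w₂ with
    | nil => rfl
    | cons => simp at hlen
  | @cons u x v h w₁ ih => cases w₂ with
    | nil => simp at hlen
    | @cons _ y _ h' w₂ =>
      obtain ⟨hdigit, hcode⟩ := Nat.eq_and_eq_of_add_mul_eq (Fin.is_lt _) (Fin.is_lt _) hcode
      obtain rfl : x = y := congrArg Subtype.val ((G.neighborFinset u).equivFin.injective
        (Fin.ext hdigit))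
      obtain ⟨rfl, hw⟩ := Sigma.mk.inj_iff.1 (ih w₂ (by simpa using hlen) hcode)
      rw [eq_of_heq hw]

lemma card_le_of_degreeProd_le {u : V} {P : (Σ v, G.Walk u v) → Prop} {k D : ℕ}
    (hP : ∀ p, P p → p.2.length = k ∧ p.2.degreeProd ≤ D) : Nat.card {p // P p} ≤ D := by
  let f (p : {p // P p}) : Fin D :=
    ⟨p.1.2.code, (code_lt_degreeProd _).trans_le (hP p.1 p.2).2⟩
  have hf : Function.Injective f := fun p q hpq =>
    Subtype.ext <| sigma_eq_of_code_eq _ _ ((hP p.1 p.2).1.trans (hP q.1 q.2).1.symm)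
      (congrArg Fin.val hpq)
  simpa using Nat.card_le_card_of_injective f hf

lemma IsPath.degreeProd_le {d : ℕ → ℕ} (hd : Antitone d) {r : V → ℕ}
    (hr : Function.Injective r) (hdeg : ∀ x, G.degree x = d (r x)) {u v : V} {w : G.Walk u v}
    (hw : w.IsPath) : w.degreeProd ≤ ∏ i ∈ range w.length, d i := by
  set L := w.darts.map fun d => r d.fst
  have hL : L.Nodup := by
    have : (w.darts.map (·.fst)).Nodup := by
      rw [map_fst_darts]; exact (List.dropLast_sublist _).nodup hw.support_nodup
    simpa [L, List.map_map, Function.comp_def] using this.map hr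
  calc w.degreeProd = ∏ i ∈ L.toFinset, d i := by
        rw [List.prod_toFinset _ hL, degreeProd, List.map_map]; simp [Function.comp_def, hdeg]
    _ ≤ ∏ i ∈ range w.length, d i := by
        simpa [List.toFinset_card_of_nodup hL, L] using hd.prod_le_prod_range L.toFinset

end SimpleGraph.Walk

theorem stmt_4_general {V : Type*} [Fintype V]
    (G : SimpleGraph V) [DecidableRel G.Adj]
    (n : ℕ)
    (d : ℕ → ℕ) (hmono : Antitone d)
    (hdegseq : ∃ σ : V ≃ Fin n, ∀ u : V, G.degree u = d (σ u))
    (v : V) (a : ℕ) :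
    Nat.card {p : Σ u : V, G.Walk v u // p.2.IsPath ∧ p.2.length = a - 1}
      ≤ ∏ i ∈ Finset.range (a - 1), d i := by
  obtain ⟨σ, hσ⟩ := hdegseq
  refine SimpleGraph.Walk.card_le_of_degreeProd_le fun p ⟨hpath, hlen⟩ => ⟨hlen, ?_⟩
  simpa [hlen] using hpath.degreeProd_le hmono (Fin.val_injective.comp σ.injective) hσ

/-- For a graph with degree sequence `d 0 ≥ d 1 ≥ …`, the number of paths on `a` vertices
starting at a fixed vertex `v` is at most `d 0 · d 1 ⋯ d (a-2)`. -/
theorem stmt_4 {V : Type*} [Fintype V] [DecidableEq V]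
    (G : SimpleGraph V) [DecidableRel G.Adj]
    (n : ℕ) (hn : n = Fintype.card V)
    (d : ℕ → ℕ) (hmono : Antitone d)
    (hdegseq : ∃ σ : V ≃ Fin n, ∀ u : V, G.degree u = d (σ u))
    (v : V) (a : ℕ) (ha : 2 ≤ a) :
    Nat.card {p : Σ u : V, G.Walk v u // p.2.IsPath ∧ p.2.length = a - 1}
      ≤ ∏ i ∈ Finset.range (a - 1), d i :=
  stmt_4_general G n d hmono hdegseq v a
end

section
/- For every s > 2 there is a constant c_s > 0 such that for all d with s ≤ d ≤ (n−1)/2 and n sufficiently large, there exists an n-vertex graph G with average degree at least d in which every nonempty induced subgraph on at most c_s·n·d^{−s/(s−2)} vertices has average degree less than s. -/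
/-!
We take a uniformly random graph on `Fin n` with `m = ⌈dn/2⌉` edges and count. A fixed set `T`
of `t` pairs lies in the edge set with probability at most `(m / C(n,2))^t ≤ (4d/n)^t`. If the
graph is bad, some `k`-set `R` with `k ≤ c n d^{-s/(s-2)}` carries a set of `⌈sk/2⌉` pairs
that are all edges; summing over `R` and the pairs gives at most
`C(n,k) C(C(k+1,2), ⌈sk/2⌉) (4d/n)^⌈sk/2⌉ ≤ ((3n/k)(12dk/n)^{s/2})^k ≤ 4^{-k}` for each `k`,
and `∑_{k ≥ 1} 4^{-k} < 1`.
-/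

open Finset
open scoped Nat

theorem Nat.cast_choose_le_three_mul_div_pow (a b : ℕ) : (a.choose b : ℝ) ≤ (3 * a / b) ^ b := by
  rcases Nat.eq_zero_or_pos b with rfl | hb
  · simp
  have hb' : (0 : ℝ) < b := by exact_mod_cast hb
  have hfact : (b : ℝ) ^ b / Real.exp 1 ^ b ≤ b ! := by
    have := Real.pow_div_factorial_le_exp (x := (b : ℝ)) hb'.le b
    rw [← Real.exp_one_pow] at this
    rw [div_le_iff₀ (by positivity)] at this ⊢
    linarith
  calc (a.choose b : ℝ) ≤ a ^ b / b ! := Nat.choose_le_pow_div b a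
    _ ≤ a ^ b / ((b : ℝ) ^ b / Real.exp 1 ^ b) := by gcongr
    _ = (Real.exp 1 * a / b) ^ b := by rw [div_pow, mul_pow]; field_simp
    _ ≤ (3 * a / b) ^ b := by gcongr; exact Real.exp_one_lt_three.le

theorem Nat.choose_sub_mul_pow_le {t m M : ℕ} (htm : t ≤ m) (hmM : m ≤ M) :
    (M - t).choose (m - t) * M ^ t ≤ M.choose m * m ^ t := by
  induction t with
  | zero => simp
  | succ t ih =>
    have hstep : (M - (t + 1)).choose (m - (t + 1)) * M ≤ (M - t).choose (m - t) * m := by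
      have hpascal := Nat.add_one_mul_choose_eq (M - (t + 1)) (m - (t + 1))
      rw [show M - (t + 1) + 1 = M - t by omega, show m - (t + 1) + 1 = m - t by omega]
        at hpascal
      refine Nat.le_of_mul_le_mul_left ?_ (show 0 < M - t by omega)
      calc (M - t) * ((M - (t + 1)).choose (m - (t + 1)) * M)
          = (M - t).choose (m - t) * ((m - t) * M) := by rw [← mul_assoc, hpascal]; ring
        _ ≤ (M - t).choose (m - t) * (m * (M - t)) := by
          have htm' : t ≤ m := by omega
          refine Nat.mul_le_mul_left _ ?_
          zify [htm', hmM, htm'.trans hmM]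
          nlinarith
        _ = (M - t) * ((M - t).choose (m - t) * m) := by ring
    calc (M - (t + 1)).choose (m - (t + 1)) * M ^ (t + 1)
        = (M - (t + 1)).choose (m - (t + 1)) * M * M ^ t := by ring
      _ ≤ (M - t).choose (m - t) * m * M ^ t := Nat.mul_le_mul_right _ hstep
      _ = (M - t).choose (m - t) * M ^ t * m := by ring
      _ ≤ M.choose m * m ^ t * m := Nat.mul_le_mul_right m (ih (by omega))
      _ = M.choose m * m ^ (t + 1) := by ring

-- Chosen so that `3 · 12^{s/2} · c^{(s-2)/2} = 1/4`.
noncomputable def sparseConst (s : ℝ) : ℝ := 12 ^ (-((s + 2) / (s - 2)))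

section SparseConst

variable {s d x : ℝ}

theorem sparseConst_pos (s : ℝ) : 0 < sparseConst s := Real.rpow_pos_of_pos (by norm_num) _

theorem sparseConst_le (hs : 2 < s) : sparseConst s ≤ 12⁻¹ := by
  have hexp : 1 ≤ (s + 2) / (s - 2) := by rw [le_div_iff₀ (by linarith)]; linarith
  calc sparseConst s ≤ (12 : ℝ) ^ (-1 : ℝ) :=
        Real.rpow_le_rpow_of_exponent_le (by norm_num) (by linarith)
    _ = 12⁻¹ := by rw [Real.rpow_neg_one]

theorem twelve_mul_mul_le_one_of_le_sparseConst (hs : 2 < s) (hd : 1 ≤ d)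
    (hx : x ≤ sparseConst s * d ^ (-(s / (s - 2)))) : 12 * d * x ≤ 1 := by
  have hd0 : 0 < d := by linarith
  have hdpow : d * d ^ (-(s / (s - 2))) ≤ 1 := by
    conv_lhs => enter [1]; rw [← Real.rpow_one d]
    rw [← Real.rpow_add hd0]
    apply Real.rpow_le_one_of_one_le_of_nonpos hd
    have : 1 ≤ s / (s - 2) := by rw [le_div_iff₀ (by linarith)]; linarith
    linarith
  calc 12 * d * x ≤ 12 * d * (sparseConst s * d ^ (-(s / (s - 2)))) := by gcongr
    _ = 12 * sparseConst s * (d * d ^ (-(s / (s - 2)))) := by ring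
    _ ≤ 12 * 12⁻¹ * 1 := by
      gcongr
      exact sparseConst_le hs
    _ = 1 := by norm_num

theorem three_div_mul_rpow_le_of_le_sparseConst (hs : 2 < s) (hd : 0 < d) (hx : 0 < x)
    (hxc : x ≤ sparseConst s * d ^ (-(s / (s - 2)))) : 3 / x * (12 * d * x) ^ (s / 2) ≤ 4⁻¹ := by
  have hs2 : s - 2 ≠ 0 := by linarith
  have hc : sparseConst s ^ (s / 2 - 1) = 12 ^ (-((s + 2) / 2)) := by
    rw [sparseConst, ← Real.rpow_mul (by norm_num)]
    congr 1
    field_simp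
  have hx' : x ^ (s / 2 - 1) ≤ 12 ^ (-((s + 2) / 2)) * d ^ (-(s / 2)) := by
    calc x ^ (s / 2 - 1) ≤ (sparseConst s * d ^ (-(s / (s - 2)))) ^ (s / 2 - 1) :=
          Real.rpow_le_rpow hx.le hxc (by linarith)
      _ = 12 ^ (-((s + 2) / 2)) * d ^ (-(s / 2)) := by
        rw [Real.mul_rpow (sparseConst_pos s).le (by positivity), hc, ← Real.rpow_mul hd.le]
        congr 2
        field_simp
  calc 3 / x * (12 * d * x) ^ (s / 2) = 3 * (12 * d) ^ (s / 2) * x ^ (s / 2 - 1) := by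
        rw [Real.mul_rpow (by positivity) hx.le, Real.rpow_sub hx, Real.rpow_one]
        field_simp
    _ ≤ 3 * (12 * d) ^ (s / 2) * (12 ^ (-((s + 2) / 2)) * d ^ (-(s / 2))) := by gcongr
    _ = 3 * (12 ^ (s / 2) * 12 ^ (-((s + 2) / 2))) * (d ^ (s / 2) * d ^ (-(s / 2))) := by
        rw [Real.mul_rpow (by norm_num) hd.le]; ring
    _ = 4⁻¹ := by
        rw [← Real.rpow_add (by norm_num), ← Real.rpow_add hd, add_neg_cancel, Real.rpow_zero,
          show s / 2 + -((s + 2) / 2) = -1 by ring, Real.rpow_neg_one]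
        norm_num

end SparseConst

-- `(k + 1).choose 2 = #R.sym2` for `#R = k`: `Finset.sym2` also contains the diagonal pairs.
theorem choose_mul_choose_mul_pow_le {s d p : ℝ} (hs : 2 < s) (hd : 1 ≤ d) {n k t : ℕ}
    (hk : 1 ≤ k) (hkn : (k : ℝ) ≤ sparseConst s * n * d ^ (-(s / (s - 2))))
    (ht : s * k / 2 ≤ t) (hp0 : 0 ≤ p) (hp : p ≤ 4 * d / n) :
    n.choose k * ((k + 1).choose 2).choose t * p ^ t ≤ (4⁻¹ : ℝ) ^ k := by
  have hd0 : 0 < d := by linarith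
  have hk0 : (0 : ℝ) < k := by exact_mod_cast hk
  have hn0 : (0 : ℝ) < n := Nat.cast_pos.2 <| Nat.pos_of_ne_zero fun hn => by
    simp only [hn, CharP.cast_eq_zero, mul_zero, zero_mul] at hkn
    linarith
  set x : ℝ := k / n with hx_def
  have hx0 : 0 < x := by positivity
  have hxc : x ≤ sparseConst s * d ^ (-(s / (s - 2))) := by
    rw [hx_def, div_le_iff₀ hn0]; linarith
  have hk1 : (1 : ℝ) ≤ k := by exact_mod_cast hk
  have hkt : (k : ℝ) ≤ t := by nlinarith
  have hpairs : (3 * ((k + 1).choose 2 : ℕ) / t : ℝ) ≤ 3 * k := by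
    rw [div_le_iff₀ (by linarith), Nat.cast_choose_two]
    push_cast
    nlinarith [mul_le_mul_of_nonneg_left hkt hk0.le]
  have hb1 : 12 * d * x ≤ 1 := twelve_mul_mul_le_one_of_le_sparseConst hs hd hxc
  calc (n.choose k * ((k + 1).choose 2).choose t * p ^ t : ℝ)
      ≤ (3 * n / k) ^ k * (3 * k) ^ t * (4 * d / n) ^ t := by
        gcongr
        · exact Nat.cast_choose_le_three_mul_div_pow n k
        · exact (Nat.cast_choose_le_three_mul_div_pow _ t).trans (by gcongr)
    _ = (3 / x) ^ k * (12 * d * x) ^ (t : ℝ) := by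
        have h3 : 3 * n / k = 3 / x := by rw [hx_def]; field_simp
        have h12 : 3 * k * (4 * d / n) = 12 * d * x := by rw [hx_def]; field_simp; ring
        rw [Real.rpow_natCast, mul_assoc, ← mul_pow, h3, h12]
    _ ≤ (3 / x) ^ k * (12 * d * x) ^ (s * k / 2) := by
        exact mul_le_mul_of_nonneg_left
          (Real.rpow_le_rpow_of_exponent_ge (by positivity) hb1 ht) (by positivity)
    _ = (3 / x * (12 * d * x) ^ (s / 2)) ^ k := by
        rw [mul_pow, ← Real.rpow_mul_natCast (by positivity)]
        ring_nf
    _ ≤ 4⁻¹ ^ k :=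
        pow_le_pow_left₀ (by positivity) (three_div_mul_rpow_le_of_le_sparseConst hs hd0 hx0 hxc) k

namespace Finset

variable {α ι : Type*} [DecidableEq α]

theorem card_filter_superset_powersetCard_le (K T : Finset α) (m : ℕ) :
    #{E ∈ K.powersetCard m | T ⊆ E} ≤ (#K - #T).choose (m - #T) := by
  by_cases hTK : T ⊆ K
  · rw [← card_sdiff_of_subset hTK, ← card_powersetCard]
    refine card_le_card_of_injOn (· \ T) (fun E hE => ?_) (fun E₁ hE₁ E₂ hE₂ h => ?_)
    · rw [mem_coe, mem_filter, mem_powersetCard] at hE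
      rw [mem_coe, mem_powersetCard]
      exact ⟨sdiff_subset_sdiff hE.1.1 le_rfl, by rw [card_sdiff_of_subset hE.2, hE.1.2]⟩
    · rw [mem_coe, mem_filter] at hE₁ hE₂
      simpa [sdiff_union_of_subset hE₁.2, sdiff_union_of_subset hE₂.2] using
        congrArg (· ∪ T) h
  · rw [filter_false_of_mem fun E hE hTE => hTK (hTE.trans (mem_powersetCard.1 hE).1)]
    exact Nat.zero_le _

theorem card_filter_superset_powersetCard_le_mul_pow {K : Finset α} {m : ℕ} (hm : m ≤ #K)
    (T : Finset α) :
    (#{E ∈ K.powersetCard m | T ⊆ E} : ℝ) ≤ (#K).choose m * ((m : ℝ) / #K) ^ #T := by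
  by_cases hTm : #T ≤ m
  · rcases (#K).eq_zero_or_pos with hK | hK
    · rw [show #T = 0 by omega, pow_zero, mul_one, ← card_powersetCard]
      exact_mod_cast card_filter_le _ _
    have hK' : (0 : ℝ) < #K := by exact_mod_cast hK
    rw [div_pow, mul_div_assoc', le_div_iff₀ (by positivity)]
    exact_mod_cast (Nat.mul_le_mul_right _ (card_filter_superset_powersetCard_le K T m)).trans
      (Nat.choose_sub_mul_pow_le hTm hm)
  · rw [filter_false_of_mem fun E hE hTE =>
      hTm ((card_le_card hTE).trans (mem_powersetCard.1 hE).2.le)]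
    simp only [card_empty, Nat.cast_zero]
    positivity

theorem exists_mem_powersetCard_forall_not_subset {K : Finset α} {m : ℕ} (hm : m ≤ #K)
    (I : Finset ι) (𝓣 : ι → Finset (Finset α))
    (h : ∑ i ∈ I, ∑ T ∈ 𝓣 i, ((m : ℝ) / #K) ^ #T < 1) :
    ∃ E ∈ K.powersetCard m, ∀ i ∈ I, ∀ T ∈ 𝓣 i, ¬ T ⊆ E := by
  by_contra! hbad
  have hcover : K.powersetCard m ⊆
      I.biUnion fun i => (𝓣 i).biUnion fun T => {E ∈ K.powersetCard m | T ⊆ E} := by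
    intro E hE
    obtain ⟨i, hi, T, hT, hTE⟩ := hbad E hE
    exact mem_biUnion.2 ⟨i, hi, mem_biUnion.2 ⟨T, hT, mem_filter.2 ⟨hE, hTE⟩⟩⟩
  have hpos : (0 : ℝ) < (#K).choose m := by exact_mod_cast Nat.choose_pos hm
  have hunion : ((#K).choose m : ℝ) ≤ ∑ i ∈ I, ∑ T ∈ 𝓣 i, (#K).choose m * ((m : ℝ) / #K) ^ #T :=
    calc ((#K).choose m : ℝ) = #(K.powersetCard m) := by rw [card_powersetCard]
      _ ≤ ∑ i ∈ I, ∑ T ∈ 𝓣 i, (#{E ∈ K.powersetCard m | T ⊆ E} : ℝ) := by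
          exact_mod_cast (card_le_card hcover).trans
            (card_biUnion_le.trans (sum_le_sum fun i _ => card_biUnion_le))
      _ ≤ _ := sum_le_sum fun i _ => sum_le_sum fun T _ =>
          card_filter_superset_powersetCard_le_mul_pow hm T
  simp only [← mul_sum] at hunion
  nlinarith

end Finset

namespace SimpleGraph

variable {V : Type*} [Fintype V] [DecidableEq V]

theorem edgeFinset_fromEdgeSet_of_subset {E : Finset (Sym2 V)}
    (hE : E ⊆ (⊤ : SimpleGraph V).edgeFinset) [Fintype (fromEdgeSet (E : Set (Sym2 V))).edgeSet] :
    (fromEdgeSet (E : Set (Sym2 V))).edgeFinset = E := by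
  rw [← coe_inj, coe_edgeFinset, edgeSet_fromEdgeSet, sdiff_eq_left,
    ← Set.subset_compl_iff_disjoint_right, ← edgeSet_top, ← coe_edgeFinset]
  exact_mod_cast hE

theorem natCard_edgeSet_induce (G : SimpleGraph V) [DecidableRel G.Adj] (R : Finset V) :
    Nat.card (G.induce (R : Set V)).edgeSet = #(G.edgeFinset ∩ R.sym2) := by
  have h := congrArg card (map_edgeFinset_induce (G := G) (s := (R : Set V)))
  rw [card_map, Finset.toFinset_coe] at h
  rw [Nat.card_eq_fintype_card, ← edgeFinset_card]
  convert h

end SimpleGraph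

theorem exists_sparse_mem_powersetCard {V : Type*} [Fintype V] [DecidableEq V] {s d : ℝ}
    (hs : 2 < s) (hd : 1 ≤ d) {K : Finset (Sym2 V)} {m : ℕ} (hm : m ≤ #K)
    (hp : (m : ℝ) / #K ≤ 4 * d / Fintype.card V) :
    ∃ E ∈ K.powersetCard m, ∀ R : Finset V, R.Nonempty →
      (#R : ℝ) ≤ sparseConst s * Fintype.card V * d ^ (-(s / (s - 2))) →
      2 * (#(E ∩ R.sym2) : ℝ) < s * #R := by
  set n := Fintype.card V
  set B := sparseConst s * n * d ^ (-(s / (s - 2)))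
  set t : ℕ → ℕ := fun k => ⌈s * k / 2⌉₊
  set p : ℝ := m / #K
  have hB : 0 ≤ B := by have := sparseConst_pos s; positivity
  set 𝓡 : Finset (Finset V) := (Icc 1 ⌊B⌋₊).biUnion (powersetCard · univ)
  have hsum : ∑ R ∈ 𝓡, ∑ T ∈ R.sym2.powersetCard (t #R), p ^ #T < 1 := by
    rw [sum_biUnion ((pairwise_disjoint_powersetCard _).set_pairwise _)]
    calc _ = ∑ k ∈ Icc 1 ⌊B⌋₊, (n.choose k * ((k + 1).choose 2).choose (t k) * p ^ t k : ℝ) := by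
          refine sum_congr rfl fun k _ => ?_
          have hinner : ∀ R ∈ powersetCard k (univ : Finset V),
              ∑ T ∈ R.sym2.powersetCard (t #R), p ^ #T =
                ((k + 1).choose 2).choose (t k) * p ^ t k := by
            intro R hR
            rw [(mem_powersetCard.1 hR).2, sum_congr rfl fun T hT => by
              rw [(mem_powersetCard.1 hT).2], sum_const, card_powersetCard, card_sym2,
              (mem_powersetCard.1 hR).2, nsmul_eq_mul]
          rw [sum_congr rfl hinner, sum_const, card_powersetCard, Finset.card_univ, nsmul_eq_mul,
            mul_assoc]
      _ ≤ ∑ k ∈ Icc 1 ⌊B⌋₊, (4⁻¹ : ℝ) ^ k := by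
          refine sum_le_sum fun k hk => ?_
          rw [mem_Icc] at hk
          exact choose_mul_choose_mul_pow_le hs hd hk.1
            ((Nat.cast_le.2 hk.2).trans (Nat.floor_le hB)) (Nat.le_ceil _)
            (by positivity) hp
      _ ≤ 4⁻¹ ^ 1 / (1 - 4⁻¹) := by
          rw [← Finset.Ico_add_one_right_eq_Icc]
          exact geom_sum_Ico_le_of_lt_one (by norm_num) (by norm_num)
      _ < 1 := by norm_num
  obtain ⟨E, hE, hfree⟩ := exists_mem_powersetCard_forall_not_subset hm _ _ hsum
  refine ⟨E, hE, fun R hR hRB => ?_⟩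
  by_contra! hdense
  obtain ⟨T, hTsub, hTcard⟩ :=
    exists_subset_card_eq (show t #R ≤ #(E ∩ R.sym2) from Nat.ceil_le.2 (by linarith))
  have hR𝓡 : R ∈ 𝓡 := mem_biUnion.2
    ⟨#R, mem_Icc.2 ⟨card_pos.2 hR, Nat.le_floor hRB⟩, mem_powersetCard.2 ⟨subset_univ R, rfl⟩⟩
  exact hfree R hR𝓡 T (mem_powersetCard.2 ⟨hTsub.trans inter_subset_right, hTcard⟩)
    (hTsub.trans inter_subset_left)

/-- Lower bound construction: for every `s > 2` there is `c_s > 0` such that for all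
`s ≤ d ≤ (n-1)/2` (with `n` large), some `n`-vertex graph with average degree at least `d`
has no subgraph with at most `c_s·n·d^{-s/(s-2)}` vertices and average degree at least `s`. -/
theorem stmt_6 (s : ℝ) (hs : 2 < s) :
    ∃ c : ℝ, 0 < c ∧ ∃ N : ℕ, ∀ n : ℕ, N ≤ n → ∀ d : ℝ, s ≤ d → d ≤ ((n : ℝ) - 1) / 2 →
      ∃ G : SimpleGraph (Fin n),
        d * (n : ℝ) ≤ 2 * (Nat.card G.edgeSet : ℝ) ∧
        ∀ R : Finset (Fin n), R.Nonempty →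
          (R.card : ℝ) ≤ c * (n : ℝ) * d ^ (-(s / (s - 2))) →
          2 * (Nat.card (G.induce (↑R : Set (Fin n))).edgeSet : ℝ) < s * (R.card : ℝ) := by
  classical
  refine ⟨sparseConst s, sparseConst_pos s, 0, fun n _ d hsd hdn => ?_⟩
  have hd : 0 < d := by linarith
  have hn : 2 * d + 1 ≤ n := by linarith
  set K := (⊤ : SimpleGraph (Fin n)).edgeFinset
  set m := ⌈d * n / 2⌉₊
  have hK : (#K : ℝ) = n * (n - 1) / 2 := by
    rw [SimpleGraph.card_edgeFinset_top_eq_card_choose_two, Fintype.card_fin, Nat.cast_choose_two]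
  have hm : d * n / 2 ≤ m := Nat.le_ceil _
  have hm' : (m : ℝ) < d * n / 2 + 1 := Nat.ceil_lt_add_one (by positivity)
  have hmK : m ≤ #K := Nat.ceil_le.2 (by rw [hK]; nlinarith)
  have hp : (m : ℝ) / #K ≤ 4 * d / Fintype.card (Fin n) := by
    rw [Fintype.card_fin, div_le_div_iff₀ (by rw [hK]; nlinarith) (by linarith), hK]
    nlinarith
  obtain ⟨E, hE, hsparse⟩ := exists_sparse_mem_powersetCard hs (by linarith) hmK hp
  rw [mem_powersetCard] at hE
  set G := SimpleGraph.fromEdgeSet (E : Set (Sym2 (Fin n)))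
  have hGE : G.edgeFinset = E := SimpleGraph.edgeFinset_fromEdgeSet_of_subset hE.1
  refine ⟨G, ?_, fun R hR hRB => ?_⟩
  · rw [Nat.card_eq_fintype_card, ← SimpleGraph.edgeFinset_card, hGE, hE.2]
    linarith
  · rw [SimpleGraph.natCard_edgeSet_induce]
    convert hsparse R hR (by rwa [Fintype.card_fin]) using 5
    convert hGE
end

section
/- For every real s > 2 and positive integer t, there exists ε = ε(s,t) > 0 such that for all sufficiently large n there is a graph G on n vertices with average degree at least n^{1−2/s+ε} in which every nonempty induced subgraph on at most t vertices has average degree less than s. -/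
/-!
Random graph with deletions. Colour every pair of vertices uniformly with `b = ⌈n ^ β⌉` colours
and keep the pairs of colour `0`: this is `G(n, 1/b)`. For `β = (2t - 1)/(st)` we have
`β ⌈sr/2⌉ ≥ r - 1/2` for all `r ≤ t`, so the expected number of sets of `⌈sr/2⌉` present edges
spanned by `r ≤ t` vertices is `O(√n)`, whereas about `n ^ (2 - β) / 2` edges are present.
Take a colouring beating the expectation of (edges − such sets) and delete one edge from each
such set. Since `2 - β = 2 - 2/s + 2ε` with `ε = 1/(2st)`, the spare factor `n ^ ε` absorbs
the constants.
-/

open Finset SimpleGraph Filter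

section RandomColouring

variable {α : Type*} [Fintype α] [DecidableEq α] {b : ℕ} [NeZero b]

theorem card_filter_forall_eq_zero (F : Finset α) :
    #{ω : α → Fin b | ∀ e ∈ F, ω e = 0} = b ^ (Fintype.card α - #F) := by
  have h : ({ω : α → Fin b | ∀ e ∈ F, ω e = 0} : Finset _) =
      Fintype.piFinset fun e => if e ∈ F then {0} else univ := by
    ext ω
    simp only [mem_filter, mem_univ, true_and, Fintype.mem_piFinset]
    refine forall_congr' fun e => ?_
    split_ifs <;> simp_all
  simp only [h, Fintype.card_piFinset, apply_ite card, card_singleton, card_univ,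
    Fintype.card_fin]
  rw [prod_ite, prod_const_one, one_mul, prod_const, filter_not, filter_mem_eq_inter, univ_inter,
    card_sdiff_of_subset F.subset_univ, card_univ]

theorem sum_card_filter_forall_eq_zero {ι : Type*} (T : Finset ι) (F : ι → Finset α) :
    ∑ ω : α → Fin b, (#{i ∈ T | ∀ e ∈ F i, ω e = 0} : ℝ)
      = b ^ Fintype.card α * ∑ i ∈ T, ((b : ℝ)⁻¹) ^ #(F i) := by
  have hb : (b : ℝ) ≠ 0 := Nat.cast_ne_zero.2 (NeZero.ne b)
  simp only [card_filter, Nat.cast_sum]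
  rw [sum_comm, mul_sum]
  refine sum_congr rfl fun i _ => ?_
  rw [← Nat.cast_sum, ← card_filter, card_filter_forall_eq_zero, Nat.cast_pow,
    pow_sub₀ _ hb (card_le_univ _), inv_pow]

end RandomColouring

namespace SimpleGraph

section Deletion

variable {V : Type*} [DecidableEq V]

open scoped Classical in
theorem exists_forall_not_subset_edgeSet {ι : Type*} (H : SimpleGraph V) (T : Finset ι)
    (F : ι → Finset (Sym2 V)) (hF : ∀ i ∈ T, (F i).Nonempty) :
    ∃ G : SimpleGraph V, Nat.card H.edgeSet ≤ Nat.card G.edgeSet + #{i ∈ T | ↑(F i) ⊆ H.edgeSet} ∧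
      ∀ i ∈ T, ¬ ↑(F i) ⊆ G.edgeSet := by
  choose e he using hF
  set B := {i ∈ T | ↑(F i) ⊆ H.edgeSet}
  set D := B.attach.image fun i => e i.1 (mem_filter.1 i.2).1
  refine ⟨H.deleteEdges D, ?_, fun i hi hsub => ?_⟩
  · calc Nat.card H.edgeSet ≤ Nat.card (H.deleteEdges D).edgeSet + #D := by
          simpa only [Nat.card_coe_set_eq, edgeSet_deleteEdges, Set.ncard_coe_finset]
            using Set.ncard_le_ncard_sdiff_add_ncard H.edgeSet D
      _ ≤ Nat.card (H.deleteEdges D).edgeSet + #B := by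
          grw [card_image_le, card_attach]
  · rw [edgeSet_deleteEdges, Set.subset_sdiff] at hsub
    have hiB : i ∈ B := mem_filter.2 ⟨hi, hsub.1⟩
    exact hsub.2.ne_of_mem (he i hi) (mem_coe.2 (mem_image_of_mem _ (mem_attach B ⟨i, hiB⟩))) rfl

end Deletion

variable {V : Type*} [Fintype V] [DecidableEq V]

open scoped Classical in
theorem exists_card_edgeSet_sub_card_subset_ge {ι : Type*} (b : ℕ) [NeZero b] (T : Finset ι)
    (F : ι → Finset (Sym2 V)) (hF : ∀ i ∈ T, F i ⊆ (⊤ : SimpleGraph V).edgeFinset) :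
    ∃ H : SimpleGraph V,
      ((Fintype.card V).choose 2 : ℝ) / b - ∑ i ∈ T, ((b : ℝ)⁻¹) ^ #(F i)
        ≤ Nat.card H.edgeSet - #{i ∈ T | ↑(F i) ⊆ H.edgeSet} := by
  set K := (⊤ : SimpleGraph V).edgeFinset
  set L := ((Fintype.card V).choose 2 : ℝ) / b - ∑ i ∈ T, ((b : ℝ)⁻¹) ^ #(F i)
  have hK : Disjoint (K : Set (Sym2 V)) Sym2.diagSet := by
    rw [coe_edgeFinset, edgeSet_top]; exact disjoint_compl_left
  let H : (Sym2 V → Fin b) → SimpleGraph V := fun ω => fromEdgeSet ↑{e ∈ K | ω e = 0}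
  have hH : ∀ ω, (H ω).edgeSet = ↑{e ∈ K | ω e = 0} := fun ω =>
    (edgeSet_eq_iff _ _).2 ⟨rfl, hK.mono_left (coe_subset.2 (filter_subset _ _))⟩
  -- edges are counted as singleton configurations, so that `sum_card_filter_forall_eq_zero` applies
  have hedges : ∀ ω, Nat.card (H ω).edgeSet = #{e ∈ K | ∀ x ∈ ({e} : Finset _), ω x = 0} := by
    intro ω
    simp only [hH, Nat.card_coe_set_eq, Set.ncard_coe_finset, mem_singleton, forall_eq]
  have hbad : ∀ ω, #{i ∈ T | ↑(F i) ⊆ (H ω).edgeSet} = #{i ∈ T | ∀ e ∈ F i, ω e = 0} := by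
    intro ω
    refine congrArg card (filter_congr fun i hi => ?_)
    rw [hH, coe_subset, subset_iff]
    exact ⟨fun h e he => (mem_filter.1 (h he)).2, fun h e he => mem_filter.2 ⟨hF i hi he, h e he⟩⟩
  have hsum : ∑ _ω : Sym2 V → Fin b, L
      ≤ ∑ ω, ((Nat.card (H ω).edgeSet : ℝ) - #{i ∈ T | ↑(F i) ⊆ (H ω).edgeSet}) := by
    simp only [hedges, hbad, sum_sub_distrib, sum_card_filter_forall_eq_zero, sum_const, card_univ,
      Fintype.card_fun, Fintype.card_fin, card_singleton, pow_one, nsmul_eq_mul, Nat.cast_pow,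
      K, card_edgeFinset_top_eq_card_choose_two, L]
    exact le_of_eq (by ring)
  obtain ⟨ω, -, hω⟩ := exists_le_of_sum_le univ_nonempty hsum
  exact ⟨H ω, hω⟩

theorem exists_card_edgeSet_ge_forall_not_subset {ι : Type*} (b : ℕ) [NeZero b] (T : Finset ι)
    (F : ι → Finset (Sym2 V))
    (hF : ∀ i ∈ T, (F i).Nonempty ∧ F i ⊆ (⊤ : SimpleGraph V).edgeFinset) :
    ∃ G : SimpleGraph V, ((Fintype.card V).choose 2 : ℝ) / b - ∑ i ∈ T, ((b : ℝ)⁻¹) ^ #(F i)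
        ≤ Nat.card G.edgeSet ∧ ∀ i ∈ T, ¬ ↑(F i) ⊆ G.edgeSet := by
  classical
  obtain ⟨H, hH⟩ := exists_card_edgeSet_sub_card_subset_ge b T F fun i hi => (hF i hi).2
  obtain ⟨G, hG, hfree⟩ := H.exists_forall_not_subset_edgeSet T F fun i hi => (hF i hi).1
  refine ⟨G, ?_, hfree⟩
  have : (Nat.card H.edgeSet : ℝ) ≤ Nat.card G.edgeSet + #{i ∈ T | ↑(F i) ⊆ H.edgeSet} := by
    exact_mod_cast hG
  linarith

end SimpleGraph

theorem sub_half_le_mul_natCeil {s β : ℝ} {t r : ℕ} (hβ : 0 ≤ β)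
    (hβst : 2 * t - 1 ≤ β * s * t) (hr : r ≤ t) : (r : ℝ) - 1 / 2 ≤ β * ⌈s * r / 2⌉₊ := by
  have hrt : (r : ℝ) ≤ t := by exact_mod_cast hr
  have hceil : β * (s * r / 2) ≤ β * ⌈s * r / 2⌉₊ := by gcongr; exact Nat.le_ceil _
  rcases Nat.eq_zero_or_pos r with rfl | hr0
  · simp
  have hr1 : (1 : ℝ) ≤ r := by exact_mod_cast hr0
  nlinarith

theorem sum_inv_card_pow_card_le_exp_one (V : Type*) [Fintype V] :
    ∑ R : Finset V, ((Fintype.card V : ℝ)⁻¹) ^ #R ≤ Real.exp 1 := by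
  set n := Fintype.card V
  have h := sum_pow_mul_eq_add_pow ((n : ℝ)⁻¹) 1 (univ : Finset V)
  simp only [one_pow, mul_one, powerset_univ, card_univ] at h
  rw [h]
  rcases Nat.eq_zero_or_pos n with hn | hn
  · simp [hn]
  calc ((n : ℝ)⁻¹ + 1) ^ n ≤ Real.exp ((n : ℝ)⁻¹) ^ n := by
        gcongr; linarith [Real.add_one_le_exp ((n : ℝ)⁻¹)]
    _ = Real.exp 1 := by rw [← Real.exp_nat_mul, mul_inv_cancel₀ (by positivity)]

-- The paper's copies of graphs on `r ≤ t` vertices with `⌈rs/2⌉` edges, each recorded together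
-- with a vertex set `R` of size `r` spanning it.
noncomputable def denseConfigs (V : Type*) [Fintype V] [DecidableEq V] (s : ℝ) (t : ℕ) :
    Finset ((_ : Finset V) × Finset (Sym2 V)) :=
  ({R : Finset V | R.Nonempty ∧ #R ≤ t} : Finset (Finset V)).sigma fun R =>
    ((⊤ : SimpleGraph V).edgeFinset ∩ R.sym2).powersetCard ⌈s * #R / 2⌉₊

section DenseConfigs

variable {V : Type*} [Fintype V] [DecidableEq V] {s : ℝ} {t : ℕ}

theorem mem_denseConfigs {p : (_ : Finset V) × Finset (Sym2 V)} :
    p ∈ denseConfigs V s t ↔ (p.1.Nonempty ∧ #p.1 ≤ t) ∧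
      p.2 ⊆ (⊤ : SimpleGraph V).edgeFinset ∩ p.1.sym2 ∧ #p.2 = ⌈s * #p.1 / 2⌉₊ := by
  simp only [denseConfigs, mem_sigma, mem_filter, mem_univ, true_and, mem_powersetCard]

theorem nonempty_of_mem_denseConfigs (hs : 0 < s) {p : (_ : Finset V) × Finset (Sym2 V)}
    (hp : p ∈ denseConfigs V s t) : p.2.Nonempty := by
  obtain ⟨⟨hR, -⟩, -, hcard⟩ := mem_denseConfigs.1 hp
  have : (0 : ℝ) < #p.1 := by exact_mod_cast hR.card_pos
  exact card_pos.1 (hcard ▸ Nat.ceil_pos.2 (by positivity))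

theorem two_mul_card_edgeSet_induce_lt (G : SimpleGraph V) (hs : 0 ≤ s)
    (hG : ∀ p ∈ denseConfigs V s t, ¬ ↑p.2 ⊆ G.edgeSet) {R : Finset V} (hR : R.Nonempty)
    (hRt : #R ≤ t) : 2 * (Nat.card (G.induce ↑R).edgeSet : ℝ) < s * #R := by
  classical
  have hcard : Nat.card (G.induce ↑R).edgeSet = #(G.edgeFinset ∩ R.sym2) := by
    rw [← filter_edgeFinset_toFinset_subset, card_filter_edgeFinset_toFinset_subset,
      edgeFinset_card, Nat.card_eq_fintype_card]
  have hlt : #(G.edgeFinset ∩ R.sym2) < ⌈s * #R / 2⌉₊ := by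
    by_contra! h
    obtain ⟨F, hFsub, hFcard⟩ := exists_subset_card_eq h
    refine hG ⟨R, F⟩ (mem_denseConfigs.2 ⟨⟨hR, hRt⟩, ?_, hFcard⟩) ?_
    · exact hFsub.trans (inter_subset_inter_right (edgeFinset_mono le_top))
    · exact (coe_subset.2 (hFsub.trans inter_subset_left)).trans (coe_edgeFinset G).le
  have hceil : (⌈s * #R / 2⌉₊ : ℝ) < s * #R / 2 + 1 := Nat.ceil_lt_add_one (by positivity)
  have : (Nat.card (G.induce ↑R).edgeSet : ℝ) + 1 ≤ ⌈s * #R / 2⌉₊ := by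
    rw [hcard]; exact_mod_cast hlt
  linarith

theorem sum_denseConfigs_pow_le {x : ℝ} (hx : 0 ≤ x) :
    ∑ p ∈ denseConfigs V s t, x ^ #p.2
      ≤ 2 ^ (t + 1).choose 2 * ∑ R : Finset V with R.Nonempty ∧ #R ≤ t, x ^ ⌈s * #R / 2⌉₊ := by
  rw [denseConfigs, sum_sigma, mul_sum]
  gcongr with R hR
  set E := (⊤ : SimpleGraph V).edgeFinset ∩ R.sym2
  have hE : #E ≤ (t + 1).choose 2 := calc
    #E ≤ #R.sym2 := card_le_card inter_subset_right
    _ = (#R + 1).choose 2 := card_sym2 R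
    _ ≤ (t + 1).choose 2 := Nat.choose_le_choose 2 (by simpa using (mem_filter.1 hR).2.2)
  rw [sum_congr rfl fun F hF => by rw [(mem_powersetCard.1 hF).2], sum_const, nsmul_eq_mul,
    card_powersetCard]
  gcongr
  exact_mod_cast (Nat.choose_le_two_pow _ _).trans (Nat.pow_le_pow_right two_pos hE)

theorem sum_denseConfigs_pow_le_rpow {β x : ℝ} (hβ : 0 ≤ β) (hβst : 2 * t - 1 ≤ β * s * t)
    (hx : 0 ≤ x) (hxβ : x ≤ (Fintype.card V : ℝ) ^ (-β)) :
    ∑ p ∈ denseConfigs V s t, x ^ #p.2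
      ≤ 3 * 2 ^ (t + 1).choose 2 * (Fintype.card V : ℝ) ^ (1 / 2 : ℝ) := by
  set n := Fintype.card V
  have hterm : ∀ R ∈ ({R : Finset V | R.Nonempty ∧ #R ≤ t} : Finset _),
      x ^ ⌈s * #R / 2⌉₊ ≤ (n : ℝ) ^ (1 / 2 : ℝ) * ((n : ℝ)⁻¹) ^ #R := by
    intro R hR
    obtain ⟨hR, hRt⟩ := (mem_filter.1 hR).2
    have hn : (1 : ℝ) ≤ n := by exact_mod_cast hR.card_pos.trans_le (card_le_univ R)
    calc x ^ ⌈s * #R / 2⌉₊ ≤ ((n : ℝ) ^ (-β)) ^ ⌈s * #R / 2⌉₊ := by gcongr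
      _ = (n : ℝ) ^ (-β * ⌈s * #R / 2⌉₊) := (Real.rpow_mul_natCast (by positivity) _ _).symm
      _ ≤ (n : ℝ) ^ ((1 / 2 : ℝ) - #R) := by
          gcongr
          linarith [sub_half_le_mul_natCeil hβ hβst hRt]
      _ = (n : ℝ) ^ (1 / 2 : ℝ) * ((n : ℝ)⁻¹) ^ #R := by
          rw [Real.rpow_sub (by positivity), Real.rpow_natCast, div_eq_mul_inv, inv_pow]
  calc ∑ p ∈ denseConfigs V s t, x ^ #p.2
      ≤ 2 ^ (t + 1).choose 2 * ∑ R : Finset V with R.Nonempty ∧ #R ≤ t, x ^ ⌈s * #R / 2⌉₊ :=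
        sum_denseConfigs_pow_le hx
    _ ≤ 2 ^ (t + 1).choose 2 * ∑ R : Finset V, (n : ℝ) ^ (1 / 2 : ℝ) * ((n : ℝ)⁻¹) ^ #R := by
        gcongr
        exact (sum_le_sum hterm).trans
          (sum_le_sum_of_subset_of_nonneg (filter_subset _ _) fun _ _ _ => by positivity)
    _ ≤ 2 ^ (t + 1).choose 2 * ((n : ℝ) ^ (1 / 2 : ℝ) * 3) := by
        rw [← mul_sum]
        gcongr
        linarith [sum_inv_card_pow_card_le_exp_one V, Real.exp_one_lt_d9]
    _ = 3 * 2 ^ (t + 1).choose 2 * (n : ℝ) ^ (1 / 2 : ℝ) := by ring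

end DenseConfigs

theorem eventually_const_mul_rpow_le_rpow {a c : ℝ} (h : a < c) (K : ℝ) :
    ∀ᶠ n : ℕ in atTop, K * (n : ℝ) ^ a ≤ (n : ℝ) ^ c := by
  have hpow := (tendsto_rpow_atTop (sub_pos.2 h)).comp tendsto_natCast_atTop_atTop
  filter_upwards [hpow.eventually_ge_atTop K, eventually_gt_atTop 0] with n hKn hn
  have hn' : (0 : ℝ) < n := by exact_mod_cast hn
  calc K * (n : ℝ) ^ a ≤ (n : ℝ) ^ (c - a) * (n : ℝ) ^ a := by
        gcongr; exact hKn
    _ = (n : ℝ) ^ c := by rw [← Real.rpow_add hn', sub_add_cancel]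

theorem rpow_two_sub_div_eight_le_choose_two_div {n : ℕ} {b β : ℝ} (hn : 2 ≤ n) (hb : 0 < b)
    (hbβ : b ≤ 2 * (n : ℝ) ^ β) : (n : ℝ) ^ (2 - β) / 8 ≤ (n.choose 2 : ℝ) / b := by
  have hn' : (2 : ℝ) ≤ n := by exact_mod_cast hn
  have hnβ : 0 < (n : ℝ) ^ β := by positivity
  have hchoose : (n : ℝ) ^ 2 / 4 ≤ n.choose 2 := by
    rw [Nat.cast_choose_two]; nlinarith
  rw [Real.rpow_sub (by positivity), Real.rpow_two, div_div, div_le_div_iff₀ (by positivity) hb]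
  nlinarith

theorem exists_card_edgeSet_ge_forall_induce_lt (V : Type*) [Fintype V] [DecidableEq V]
    {s β : ℝ} {t : ℕ} (hs : 0 < s) (hβ : 0 ≤ β) (hβst : 2 * t - 1 ≤ β * s * t)
    (hV : 2 ≤ Fintype.card V) :
    ∃ G : SimpleGraph V,
      (Fintype.card V : ℝ) ^ (2 - β) / 8
          - 3 * 2 ^ (t + 1).choose 2 * (Fintype.card V : ℝ) ^ (1 / 2 : ℝ) ≤ Nat.card G.edgeSet ∧
      ∀ R : Finset V, R.Nonempty → #R ≤ t → 2 * (Nat.card (G.induce ↑R).edgeSet : ℝ) < s * #R := by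
  set n := Fintype.card V
  have hnβ : 1 ≤ (n : ℝ) ^ β := Real.one_le_rpow (by exact_mod_cast (by omega : 1 ≤ n)) hβ
  set b := ⌈(n : ℝ) ^ β⌉₊
  have hb : (0 : ℝ) < b := by exact_mod_cast Nat.ceil_pos.2 (by linarith)
  have : NeZero b := ⟨by exact_mod_cast hb.ne'⟩
  obtain ⟨G, hG, hfree⟩ := exists_card_edgeSet_ge_forall_not_subset b (denseConfigs V s t)
    Sigma.snd fun p hp => ⟨nonempty_of_mem_denseConfigs hs hp,
      (mem_denseConfigs.1 hp).2.1.trans inter_subset_left⟩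
  refine ⟨G, ?_, fun R hR hRt => two_mul_card_edgeSet_induce_lt G hs.le hfree hR hRt⟩
  have hbad := sum_denseConfigs_pow_le_rpow (V := V) (x := (b : ℝ)⁻¹) hβ hβst (by positivity)
    (by rw [Real.rpow_neg (by positivity)]; exact inv_anti₀ (by positivity) (Nat.le_ceil _))
  have hedges := rpow_two_sub_div_eight_le_choose_two_div hV hb (Nat.ceil_le_two_mul (by linarith))
  linarith

/-- Lower bound: for every `s > 2` and `t`, there is `ε > 0` such that for large `n` some
`n`-vertex graph with average degree at least `n^{1-2/s+ε}` has no nonempty subgraph on at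
most `t` vertices with average degree at least `s`. -/
theorem stmt_7 (s : ℝ) (hs : 2 < s) (t : ℕ) (ht : 0 < t) :
    ∃ ε : ℝ, 0 < ε ∧ ∃ N : ℕ, ∀ n : ℕ, N ≤ n →
      ∃ G : SimpleGraph (Fin n),
        (n : ℝ) ^ (1 - 2 / s + ε) * (n : ℝ) ≤ 2 * (Nat.card G.edgeSet : ℝ) ∧
        ∀ R : Finset (Fin n), R.Nonempty → R.card ≤ t →
          2 * (Nat.card (G.induce (↑R : Set (Fin n))).edgeSet : ℝ) < s * (R.card : ℝ) := by
  have hs0 : 0 < s := by linarith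
  have ht1 : (1 : ℝ) ≤ t := by exact_mod_cast ht
  set β : ℝ := (2 * t - 1) / (s * t) with hβ_def
  set ε : ℝ := 1 / (2 * s * t) with hε_def
  have hβ : 0 ≤ β := div_nonneg (by linarith) (by positivity)
  have hβst : 2 * t - 1 ≤ β * s * t := by rw [hβ_def, mul_assoc, div_mul_cancel₀ _ (by positivity)]
  have hβε : β = 2 / s - 2 * ε := by rw [hβ_def, hε_def]; field_simp
  have hε : 0 < ε := by positivity
  have hs1 : 2 / s < 1 := by rw [div_lt_one hs0]; exact hs
  obtain ⟨N, hN⟩ := eventually_atTop.1 ((eventually_ge_atTop 2).and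
    ((eventually_const_mul_rpow_le_rpow (show 2 - 2 / s + ε < 2 - β by linarith) 8).and
      (eventually_const_mul_rpow_le_rpow (show (1 / 2 : ℝ) < 2 - β by linarith)
        (48 * 2 ^ (t + 1).choose 2))))
  refine ⟨ε, hε, N, fun n hn => ?_⟩
  obtain ⟨hn2, hε8, hsqrt⟩ := hN n hn
  obtain ⟨G, hG, hsparse⟩ := exists_card_edgeSet_ge_forall_induce_lt (Fin n) hs0 hβ hβst
    (by rwa [Fintype.card_fin])
  refine ⟨G, ?_, hsparse⟩
  rw [Fintype.card_fin] at hG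
  rw [← Real.rpow_add_one (by positivity : (n : ℝ) ≠ 0),
    show 1 - 2 / s + ε + 1 = 2 - 2 / s + ε by ring]
  linarith
end
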